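/- Define m₃(R) = (1/(1 + R²)³)·( 1 + 3R² + (π²/3)·(1 − R²) − (1 + 7R² + 7R⁴ + R⁶)·log(1 + R²)/(2R²) + (1 − R²)·Li₂(−R²) ) for R > 0. Then |m₃(R)| ≤ (3 + 2π²)/6 for all R > 0. -/

import Mathlib

open Real MeasureTheory

/-- The dilogarithm Li₂(x) = ∫₀^x (−log(1−y)/y) dy, defined for x ≤ 1. -/
noncomputable def Li2 (x : ℝ) : ℝ := ∫ y in (0:ℝ)..x, -Real.log (1 - y) / y

/-- The coefficient function m₃. -/
noncomputable def m3 (R : ℝ) : ℝ :=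
  (1/(1 + R^2)^3) * (1 + 3*R^2 + (π^2/3)*(1 - R^2)
    - (1 + 7*R^2 + 7*R^4 + R^6) * Real.log (1 + R^2) / (2*R^2)
    + (1 - R^2) * Li2 (-R^2))

/-!
With `s = R²`, the two transcendental terms of `m₃` are squeezed by elementary bounds:
`s - s²/2 ≤ log (1 + s) ≤ s`, and, since `Li₂(-s) = -∫₀ˢ log (1 + u) / u du` with
`1 - u/2 ≤ log (1 + u) / u ≤ 1`, also `-s ≤ Li₂(-s) ≤ min 0 (-s + s²/4)`. Substituting these
into the numerator of `m₃` and using `π² ≥ 9` leaves polynomial inequalities in `s`, checked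
separately for `s ≤ 1` and `s > 1`.
-/

lemma sub_sq_div_two_le_log_one_add {x : ℝ} (hx : 0 ≤ x) : x - x ^ 2 / 2 ≤ log (1 + x) := by
  refine le_trans ?_ (le_log_one_add_of_nonneg hx)
  rw [le_div_iff₀ (by linarith)]
  nlinarith [pow_nonneg hx 3]

lemma one_sub_div_two_le_log_one_add_div {u : ℝ} (hu : 0 < u) :
    1 - u / 2 ≤ log (1 + u) / u := by
  rw [le_div_iff₀ hu]
  linarith [sub_sq_div_two_le_log_one_add hu.le]

lemma log_one_add_div_le_one {u : ℝ} (hu : 0 < u) : log (1 + u) / u ≤ 1 := by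
  rw [div_le_one hu]
  linarith [log_le_sub_one_of_pos (show 0 < 1 + u by linarith)]

lemma log_one_add_div_nonneg {u : ℝ} (hu : 0 ≤ u) : 0 ≤ log (1 + u) / u :=
  div_nonneg (log_nonneg (by linarith)) hu

lemma Li2_neg_eq_neg_integral (s : ℝ) : Li2 (-s) = -∫ u in (0:ℝ)..s, log (1 + u) / u := by
  rw [Li2, intervalIntegral.integral_symm, ← neg_zero, ← intervalIntegral.integral_comp_neg]
  simp only [sub_eq_add_neg, neg_neg, neg_div_neg_eq, neg_zero]

lemma intervalIntegrable_log_one_add_div {s : ℝ} (hs : 0 ≤ s) :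
    IntervalIntegrable (fun u => log (1 + u) / u) volume 0 s := by
  refine (intervalIntegrable_const (c := (1:ℝ))).mono_fun
    (by fun_prop : Measurable fun u : ℝ => log (1 + u) / u).aestronglyMeasurable
    ((ae_restrict_iff' measurableSet_uIoc).2 (.of_forall fun u hu => ?_))
  rw [Set.uIoc_of_le hs] at hu
  simp only [norm_one, Real.norm_eq_abs, abs_of_nonneg (log_one_add_div_nonneg hu.1.le)]
  exact log_one_add_div_le_one hu.1

lemma neg_le_Li2_neg {s : ℝ} (hs : 0 ≤ s) : -s ≤ Li2 (-s) := by
  have h := intervalIntegral.integral_mono_on_of_le_Ioo hs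
    (intervalIntegrable_log_one_add_div hs) intervalIntegrable_const
    fun u hu => log_one_add_div_le_one hu.1
  rw [intervalIntegral.integral_const, smul_eq_mul, sub_zero, mul_one] at h
  rw [Li2_neg_eq_neg_integral]
  linarith

lemma Li2_neg_nonpos {s : ℝ} (hs : 0 ≤ s) : Li2 (-s) ≤ 0 := by
  rw [Li2_neg_eq_neg_integral, neg_nonpos]
  exact intervalIntegral.integral_nonneg hs fun u hu => log_one_add_div_nonneg hu.1

lemma Li2_neg_le {s : ℝ} (hs : 0 ≤ s) : Li2 (-s) ≤ -s + s ^ 2 / 4 := by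
  have h_int : ∫ u in (0:ℝ)..s, (1 - u / 2) = s - s ^ 2 / 4 := by
    norm_num [integral_id]
    ring
  -- the integrand is `0` at `u = 0` (division by zero), so the comparison is made on `Ioo 0 s`
  have h := intervalIntegral.integral_mono_on_of_le_Ioo hs
    ((by fun_prop : Continuous fun u : ℝ => 1 - u / 2).intervalIntegrable 0 s)
    (intervalIntegrable_log_one_add_div hs)
    fun u hu => one_sub_div_two_le_log_one_add_div hu.1
  rw [Li2_neg_eq_neg_integral]
  linarith

noncomputable def m3Numerator (s a b : ℝ) : ℝ :=
  1 + 3 * s + π ^ 2 / 3 * (1 - s) - (1 + 7 * s + 7 * s ^ 2 + s ^ 3) * a / (2 * s) + (1 - s) * b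

lemma m3_eq_div (R : ℝ) :
    m3 R = m3Numerator (R ^ 2) (log (1 + R ^ 2)) (Li2 (-R ^ 2)) / (1 + R ^ 2) ^ 3 := by
  rw [m3, m3Numerator]
  ring

lemma nine_le_pi_sq : 9 ≤ π ^ 2 := by
  nlinarith [pi_gt_three]

lemma neg_le_m3Numerator {s a b : ℝ} (hs : 0 < s) (ha : a ≤ s) (hb : -s ≤ b) (hb' : b ≤ 0) :
    -((3 + 2 * π ^ 2) / 6 * (1 + s) ^ 3) ≤ m3Numerator s a b := by
  set X := 1 + 7 * s + 7 * s ^ 2 + s ^ 3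
  have h_log_term : X * a / (2 * s) ≤ X / 2 := by
    rw [div_le_iff₀ (by positivity)]
    nlinarith [mul_le_mul_of_nonneg_left ha (by positivity : 0 ≤ X)]
  have h_Li2_term : -((1 + s) * s) ≤ (1 - s) * b := by
    rcases le_or_gt s 1 with h | h
    · nlinarith [mul_le_mul_of_nonneg_left hb (by linarith : (0:ℝ) ≤ 1 - s)]
    · nlinarith [mul_nonneg (by linarith : (0:ℝ) ≤ s - 1) (by linarith : (0:ℝ) ≤ -b)]
  rw [m3Numerator]
  nlinarith [mul_nonneg (sub_nonneg.2 nine_le_pi_sq)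
    (by positivity : (0:ℝ) ≤ 2 + 2 * s + 3 * s ^ 2 + s ^ 3)]

lemma m3Numerator_le_of_le_one {s a b : ℝ} (hs : 0 < s) (hs1 : s ≤ 1) (ha : s - s ^ 2 / 2 ≤ a)
    (hb : b ≤ -s + s ^ 2 / 4) :
    m3Numerator s a b ≤ (3 + 2 * π ^ 2) / 6 * (1 + s) ^ 3 := by
  set X := 1 + 7 * s + 7 * s ^ 2 + s ^ 3
  have h_log_term : X * (2 - s) / 4 ≤ X * a / (2 * s) := by
    rw [div_le_div_iff₀ (by norm_num) (by positivity)]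
    nlinarith [mul_le_mul_of_nonneg_left ha (by positivity : 0 ≤ X)]
  have h_Li2_term : (1 - s) * b ≤ (1 - s) * (-s + s ^ 2 / 4) :=
    mul_le_mul_of_nonneg_left hb (by linarith)
  rw [m3Numerator]
  nlinarith [mul_nonneg (sub_nonneg.2 nine_le_pi_sq)
      (by positivity : (0:ℝ) ≤ 4 * s + 3 * s ^ 2 + s ^ 3),
    mul_nonneg (pow_nonneg hs.le 3) (by linarith : (0:ℝ) ≤ 1 - s)]

lemma m3Numerator_le_of_one_lt {s a b : ℝ} (hs1 : 1 < s) (ha : 0 ≤ a) (hb : -s ≤ b) :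
    m3Numerator s a b ≤ (3 + 2 * π ^ 2) / 6 * (1 + s) ^ 3 := by
  have h_log_term : 0 ≤ (1 + 7 * s + 7 * s ^ 2 + s ^ 3) * a / (2 * s) := by positivity
  have h_Li2_term : (1 - s) * b ≤ (s - 1) * s := by nlinarith
  rw [m3Numerator]
  nlinarith [mul_nonneg (sub_nonneg.2 nine_le_pi_sq) (by positivity : (0:ℝ) ≤ (1 + s) ^ 3)]

/-- The uniform bound |m₃(R)| ≤ (3 + 2π²)/6 for all R > 0. -/
theorem stmt19 : ∀ R : ℝ, 0 < R → |m3 R| ≤ (3 + 2*π^2)/6 := by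
  intro R hR
  have hs : 0 < R ^ 2 := by positivity
  have h_log_le : log (1 + R ^ 2) ≤ R ^ 2 := by
    linarith [log_le_sub_one_of_pos (by positivity : 0 < 1 + R ^ 2)]
  rw [m3_eq_div, abs_div, abs_of_pos (by positivity : (0:ℝ) < (1 + R ^ 2) ^ 3),
    div_le_iff₀ (by positivity), abs_le]
  refine ⟨neg_le_m3Numerator hs h_log_le (neg_le_Li2_neg hs.le) (Li2_neg_nonpos hs.le), ?_⟩
  rcases le_or_gt (R ^ 2) 1 with h_le | h_gt
  · exact m3Numerator_le_of_le_one hs h_le (sub_sq_div_two_le_log_one_add hs.le)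
      (Li2_neg_le hs.le)
  · exact m3Numerator_le_of_one_lt h_gt (log_nonneg (by linarith)) (neg_le_Li2_neg hs.le)
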